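/- If the machine M is FTA-compliant with the downgrader architectural specification (DG, C_DG), i.e., FTA-compliant with (DG, ℐ) for some ℐ ∈ C_DG, and π(p) depends on {C} actions at α, then M,π,α ⊨ ¬K_L p. -/

import Mathlib

structure Machine (S A D O : Type) where
  s0 : S
  step : S → A → S
  dom : A → D
  obs : D → S → O

namespace Machine

def run {S A D O : Type} (M : Machine S A D O) (α : List A) : S :=
  α.foldl M.step M.s0

end Machine
/-- Elements of a view: actions or (group) observations. -/
inductive VE (A O' : Type) where
  | act : A → VE A O'
  | obs : O' → VE A O'

open Classical in
/-- Absorptive concatenation: `σ ∘ x` is `σ` if `x` equals the last element of `σ`,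
and `σ ++ [x]` otherwise. -/
noncomputable def absorb {X : Type} (σ : List X) (x : X) : List X :=
  if σ.getLast? = some x then σ else σ ++ [x]

open Classical in
/-- View of a group `G`, computed on the reversed action sequence. -/
noncomputable def viewR {S A D O : Type} (M : Machine S A D O) (G : Set D) :
    List A → List (VE A (G → O))
  | [] => [VE.obs (fun u : G => M.obs u.1 M.s0)]
  | a :: ρ =>
    let o : VE A (G → O) := VE.obs (fun u : G => M.obs u.1 (M.run ((a :: ρ).reverse)))
    if M.dom a ∈ G then viewR M G ρ ++ [VE.act a, o] else absorb (viewR M G ρ) o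

/-- The view of group `G` of the action sequence `α`. -/
noncomputable def view {S A D O : Type} (M : Machine S A D O) (G : Set D) (α : List A) :
    List (VE A (G → O)) :=
  viewR M G α.reverse
/-- Formulas of the epistemic logic (without distributed knowledge). -/
inductive Formula (PC D : Type) where
  | tru : Formula PC D
  | atom : PC → Formula PC D
  | neg : Formula PC D → Formula PC D
  | conj : Formula PC D → Formula PC D → Formula PC D
  | know : Set D → Formula PC D → Formula PC D

/-- Satisfaction relation `M,π,α ⊨ φ`. -/
def sat {S A D O PC : Type} (M : Machine S A D O) (π : PC → Set (List A)) :
    List A → Formula PC D → Prop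
  | _, .tru => True
  | α, .atom p => α ∈ π p
  | α, .neg φ => ¬ sat M π α φ
  | α, .conj φ ψ => sat M π α φ ∧ sat M π α ψ
  | α, .know G φ => ∀ α', view M G α' = view M G α → sat M π α' φ
open Classical in
/-- `restr dm G α` : subsequence of `α` of actions whose domain lies in `G`. -/
noncomputable def restr {A D : Type} (dm : A → D) (G : Set D) (α : List A) : List A :=
  α.filter (fun a => decide (dm a ∈ G))

/-- Proposition `X` depends on `G` actions at `α`. -/
def DependsOnActs {A D : Type} (dm : A → D) (G : Set D) (X : Set (List A)) (α : List A) :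
    Prop :=
  ∃ β : List A, restr dm Gᶜ α = restr dm Gᶜ β ∧ (α ∈ X ↔ β ∉ X)
/-- An extended architecture: `edge u v = none` means no edge, `edge u v = some none`
means an edge labelled `⊤`, and `edge u v = some (some f)` means an edge labelled by
the filter-function name `f`.  There is at most one label per ordered pair by
construction, and the relation is reflexive with label `⊤`. -/
structure ExtArch (D L : Type) where
  edge : D → D → Option (Option L)
  refl : ∀ u, edge u u = some none

/-- Values of the `tf` function and of filter-function interpretations:
`eps` is the empty value ε, `base v` an arbitrary basic value, and
`pair σ a` the pair `(σ, a)` of a `tf` value and an action. -/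
inductive TFVal (A V : Type) where
  | eps : TFVal A V
  | base : V → TFVal A V
  | pair : List (TFVal A V) → A → TFVal A V

/-- `σ ⌢ x`: appends `x` as a single new last element unless `x = ε`. -/
def snoc' {A V : Type} (σ : List (TFVal A V)) : TFVal A V → List (TFVal A V)
  | .eps => σ
  | x => σ ++ [x]

/-- `tf`, computed on the reversed action sequence. -/
def tfR {A D L V : Type} (Arch : ExtArch D L) (dm : A → D)
    (I : L → List A → A → TFVal A V) : List A → D → List (TFVal A V)
  | [], _ => []
  | a :: ρ, u =>
    match Arch.edge (dm a) u with
    | none => tfR Arch dm I ρ u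
    | some none => tfR Arch dm I ρ u ++ [TFVal.pair (tfR Arch dm I ρ (dm a)) a]
    | some (some f) => snoc' (tfR Arch dm I ρ u) (I f ρ.reverse a)

/-- `tf Arch dm I α u` : maximal information domain `u` is permitted to have after `α`. -/
def tf {A D L V : Type} (Arch : ExtArch D L) (dm : A → D)
    (I : L → List A → A → TFVal A V) (α : List A) (u : D) : List (TFVal A V) :=
  tfR Arch dm I α.reverse u

/-- `inF Arch dm I α a u` : the information `in_{dom(a),u}(α, a)` transmitted to `u`
when action `a` is performed after `α`. -/
def inF {A D L V : Type} (Arch : ExtArch D L) (dm : A → D)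
    (I : L → List A → A → TFVal A V) (α : List A) (a : A) (u : D) : TFVal A V :=
  match Arch.edge (dm a) u with
  | none => TFVal.eps
  | some none => TFVal.pair (tf Arch dm I α (dm a)) a
  | some (some f) => I f α a
/-- FTA-compliance of a machine with an interpreted extended architecture
(whose actions, domains and domain function are those of the machine). -/
def FTACompliant {S A D O L V : Type} (M : Machine S A D O) (Arch : ExtArch D L)
    (I : L → List A → A → TFVal A V) : Prop :=
  ∀ (u : D) (α α' : List A), tf Arch M.dom I α u = tf Arch M.dom I α' u →
    M.obs u (M.run α) = M.obs u (M.run α')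
/-- The five domains of the downgrader architecture `DG` (`Dg` is the
downgrader `D`, `Lo` the low-security domain `L`). -/
inductive DGDom where
  | C : DGDom
  | P : DGDom
  | H : DGDom
  | Dg : DGDom
  | Lo : DGDom
deriving DecidableEq

/-- The downgrader extended architecture: reflexive `⊤`-edges, `C ↝_⊤ H`,
`P ↝_⊤ H`, `H ↝_⊤ D` and `D ↝_rel L` (the label set is `Unit`, with `()`
standing for `rel`). -/
def DGArch : ExtArch DGDom Unit where
  edge u v :=
    match u, v with
    | .C, .C => some none
    | .P, .P => some none
    | .H, .H => some none
    | .Dg, .Dg => some none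
    | .Lo, .Lo => some none
    | .C, .H => some none
    | .P, .H => some none
    | .H, .Dg => some none
    | .Dg, .Lo => some (some ())
    | _, _ => none
  refl u := by cases u <;> rfl

/-- The policy `↝′`: `(u,v,f) ∈ ↝′` iff `f = ⊤` and either `u = v = C` or
there is an edge `(u,v,g)` in `DG` with `{u,v} ⊆ {P,H,D,L}`. -/
def DGArch' : ExtArch DGDom Unit where
  edge u v :=
    if (u = DGDom.C ∧ v = DGDom.C) ∨
        ((DGArch.edge u v).isSome = true ∧ u ≠ DGDom.C ∧ v ≠ DGDom.C)
    then some none else none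
  refl u := by cases u <;> decide

/-- Membership in the downgrader architectural specification `C_DG`: the
filter function `rel` transmits `(tf_D^{↝′}(α), a)`. -/
def memCDG {A V : Type} (dm : A → DGDom) (I : Unit → List A → A → TFVal A V) :
    Prop :=
  ∀ (α : List A) (a : A), dm a = DGDom.Dg →
    I () α a = TFVal.pair (tf DGArch' dm I α DGDom.Dg) a

/-!
Deleting the actions of `C` from a run changes nothing that `L` may know. Under `↝′`, `C` sends
no information to any other domain, so `tf_D^{↝′}` and hence the downgrader's release
`(tf_D^{↝′}(α), a)` are blind to `C` actions; and `C` has no edge to `L`, so `tf_L` is blind to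
them too. FTA-compliance then makes `obs_L` blind to `C` actions, and since `C` actions are not
`L` actions, the view of `L` (whose `C`-steps only repeat an unchanged observation, which
absorptive concatenation swallows) depends only on `α↾{C}ᶜ`. A `β` with `β↾{C}ᶜ = α↾{C}ᶜ`
and `β ∈ π(p) ↔ α ∉ π(p)` is thus indistinguishable from `α` for `L`.
-/

section Restr

variable {A D : Type} (dm : A → D) (K : Set D)

theorem restr_cons_of_mem {a : A} (ha : dm a ∈ K) (α : List A) :
    restr dm K (a :: α) = a :: restr dm K α :=
  List.filter_cons_of_pos (by simpa using ha)

theorem restr_cons_of_notMem {a : A} (ha : dm a ∉ K) (α : List A) :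
    restr dm K (a :: α) = restr dm K α :=
  List.filter_cons_of_neg (by simpa using ha)

theorem restr_reverse (α : List A) : restr dm K α.reverse = (restr dm K α).reverse :=
  List.filter_reverse

theorem restr_restr (α : List A) : restr dm K (restr dm K α) = restr dm K α := by
  simp only [restr, List.filter_filter, Bool.and_self]

end Restr

theorem getLast?_absorb {X : Type} (σ : List X) (x : X) : (absorb σ x).getLast? = some x := by
  unfold absorb
  split_ifs with h
  · exact h
  · exact List.getLast?_concat

theorem absorb_of_getLast?_eq {X : Type} {σ : List X} {x : X} (h : σ.getLast? = some x) :
    absorb σ x = σ :=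
  if_pos h

section View

variable {S A D O : Type} (M : Machine S A D O) (G K : Set D)

theorem viewR_getLast? (ρ : List A) :
    (viewR M G ρ).getLast? = some (VE.obs fun u : G => M.obs u.1 (M.run ρ.reverse)) := by
  cases ρ with
  | nil => rfl
  | cons a ρ =>
    rw [viewR]
    split_ifs
    · rw [← List.singleton_append, ← List.append_assoc]
      exact List.getLast?_concat
    · exact getLast?_absorb _ _

theorem view_restr (hG : G ⊆ K)
    (hobs : ∀ α, ∀ u ∈ G, M.obs u (M.run α) = M.obs u (M.run (restr M.dom K α)))
    (α : List A) : view M G α = view M G (restr M.dom K α) := by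
  have hobs_fun (α β : List A) (h : restr M.dom K α = restr M.dom K β) :
      (fun u : G => M.obs u.1 (M.run α)) = fun u : G => M.obs u.1 (M.run β) := by
    funext u
    rw [hobs α u u.2, hobs β u u.2, h]
  suffices h : ∀ ρ, viewR M G ρ = viewR M G (restr M.dom K ρ) by
    rw [view, view, h, restr_reverse]
  intro ρ
  induction ρ with
  | nil => rfl
  | cons a ρ ih =>
    by_cases ha : M.dom a ∈ K
    · rw [restr_cons_of_mem _ _ ha, viewR, viewR, ← ih,
        hobs_fun (a :: ρ).reverse (a :: restr M.dom K ρ).reverse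
          (by simp only [restr_reverse, restr_cons_of_mem _ _ ha, restr_restr])]
    · have haG : M.dom a ∉ G := fun h => ha (hG h)
      rw [restr_cons_of_notMem _ _ ha, viewR, if_neg haG, ← ih,
        hobs_fun (a :: ρ).reverse ρ.reverse
          (by rw [restr_reverse, restr_reverse, restr_cons_of_notMem _ _ ha])]
      exact absorb_of_getLast?_eq (viewR_getLast? M G ρ)

end View

section TF

variable {A D L V : Type} (Arch : ExtArch D L) (dm : A → D) (I : L → List A → A → TFVal A V)
  (K U : Set D)

theorem tf_restr (hK : ∀ a, dm a ∉ K → ∀ u ∈ U, Arch.edge (dm a) u = none)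
    (hU : ∀ v, ∀ u ∈ U, Arch.edge v u = some none → v ∈ U)
    (hfilter : ∀ α a f, ∀ u ∈ U, Arch.edge (dm a) u = some (some f) →
      I f α a = I f (restr dm K α) a)
    (α : List A) : ∀ u ∈ U, tf Arch dm I α u = tf Arch dm I (restr dm K α) u := by
  suffices h : ∀ ρ, ∀ u ∈ U, tfR Arch dm I ρ u = tfR Arch dm I (restr dm K ρ) u by
    intro u hu
    rw [tf, tf, h _ u hu, restr_reverse]
  intro ρ
  induction ρ with
  | nil => intro u _; rfl
  | cons a ρ ih =>
    intro u hu
    by_cases ha : dm a ∈ K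
    · rw [restr_cons_of_mem _ _ ha]
      rcases h : Arch.edge (dm a) u with _ | _ | f
      · simp only [tfR, h, ih u hu]
      · simp only [tfR, h, ih u hu, ih (dm a) (hU _ u hu h)]
      · simp only [tfR, h, ih u hu]
        rw [hfilter _ a f u hu h, restr_reverse]
    · rw [restr_cons_of_notMem _ _ ha, tfR, hK a ha u hu]
      exact ih u hu

end TF

theorem tf_DGArch'_restr {A V : Type} (dm : A → DGDom) (I : Unit → List A → A → TFVal A V)
    (α : List A) {u : DGDom} (hu : u ≠ .C) :
    tf DGArch' dm I α u = tf DGArch' dm I (restr dm {DGDom.C}ᶜ α) u := by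
  refine tf_restr DGArch' dm I _ {DGDom.C}ᶜ ?_ ?_ ?_ α u hu
  · intro a ha u hu
    simp_all [DGArch']
  · intro v u hu h
    by_contra hv
    simp_all [DGArch']
  · intro α a f u _ h
    simp [DGArch'] at h

theorem tf_DGArch_Lo_restr {A V : Type} (dm : A → DGDom) (I : Unit → List A → A → TFVal A V)
    (hI : memCDG dm I) (α : List A) :
    tf DGArch dm I α .Lo = tf DGArch dm I (restr dm {DGDom.C}ᶜ α) .Lo := by
  refine tf_restr DGArch dm I _ {DGDom.Lo} ?_ ?_ ?_ α .Lo rfl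
  · intro a ha u hu
    simp_all [DGArch]
  · intro v u hu h
    cases v <;> simp_all [DGArch]
  · intro α a f u hu h
    have hDg : dm a = .Dg := by
      rw [hu] at h
      cases hd : dm a <;> simp_all [DGArch]
    rw [hI α a hDg, hI _ a hDg, tf_DGArch'_restr dm I α (by decide)]

theorem view_Lo_restr {S A O V : Type} (M : Machine S A DGDom O)
    (I : Unit → List A → A → TFVal A V) (hI : memCDG M.dom I) (hFTA : FTACompliant M DGArch I)
    (α : List A) :
    view M {DGDom.Lo} α = view M {DGDom.Lo} (restr M.dom {DGDom.C}ᶜ α) := by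
  refine view_restr M _ _ (by simp) (fun β u hu => ?_) α
  rw [hu]
  exact hFTA .Lo _ _ (tf_DGArch_Lo_restr M.dom I hI β)

/-- if `M` is FTA-compliant with `(DG, C_DG)` and `π(p)` depends
on `{C}` actions at `α`, then `M,π,α ⊨ ¬K_L p`. -/
theorem statement10 {S A O V PC : Type} (M : Machine S A DGDom O)
    (I : Unit → List A → A → TFVal A V) (hI : memCDG M.dom I)
    (hFTA : FTACompliant M DGArch I)
    (π : PC → Set (List A)) (p : PC) (α : List A)
    (hdep : DependsOnActs M.dom {DGDom.C} (π p) α) :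
    sat M π α (Formula.neg (Formula.know {DGDom.Lo} (Formula.atom p))) := by
  obtain ⟨β, hrestr, hflip⟩ := hdep
  intro hknow
  have hview : view M {DGDom.Lo} β = view M {DGDom.Lo} α := by
    rw [view_Lo_restr M I hI hFTA α, view_Lo_restr M I hI hFTA β, hrestr]
  exact hflip.mp (hknow α rfl) (hknow β hview)
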